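/- Let K : R_Ω → ℝ^{n_u} be a continuous piecewise affine function on a bounded polytopic set R_Ω ⊆ ℝ^{n_x}, and suppose there exist invertible affine maps A_x : ℝ^{n_x} → ℝ^{n_x} with A_x(R_Ω) = [0,1]^{n_x} and A_u : ℝ^{n_u} → ℝ^{n_u} such that every component of A_u ∘ K ∘ A_x^{-1} is nonnegative on [0,1]^{n_x}. Then there exist, for each i = 1, …, n_u, depths r_{γ,i}, r_{η,i} ≥ 1 and parameters θ_{γ,i}, θ_{η,i} of scalar-output ReLU networks of width w = n_x + 1, such that for all x ∈ R_Ω, K(x) = A_u^{-1}( ( N(A_x(x);θ_{γ,i}, w, r_{γ,i}) − N(A_x(x);θ_{η,i}, w, r_{η,i}) )_{i=1,…,n_u} ); that is, K is exactly represented by two invertible affine transformations and 2 n_u deep ReLU networks. -/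

import Mathlib

open Finset Matrix

/-- The affine map `x ↦ W x + b`. -/
def affineMapVec {m n : ℕ} (W : Matrix (Fin m) (Fin n) ℝ) (b : Fin m → ℝ)
    (x : Fin n → ℝ) : Fin m → ℝ :=
  fun i => (∑ j, W i j * x j) + b i

/-- Componentwise rectifier (ReLU). -/
def reluVec {n : ℕ} (v : Fin n → ℝ) : Fin n → ℝ := fun i => max 0 (v i)

/-- Parameters θ of a feed-forward ReLU network with `L ≥ 1` hidden layers of width `M`,
input dimension `nx` and output dimension `nu`:  the first hidden layer `(W1, b1)`,
the `L - 1` remaining hidden layers `(W l, b l)`, and the output layer `(Wout, bout)`. -/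
structure ReLUNetParams (nx nu M L : ℕ) where
  W1 : Matrix (Fin M) (Fin nx) ℝ
  b1 : Fin M → ℝ
  W : Fin (L - 1) → Matrix (Fin M) (Fin M) ℝ
  b : Fin (L - 1) → Fin M → ℝ
  Wout : Matrix (Fin nu) (Fin M) ℝ
  bout : Fin nu → ℝ

/-- The function `N(·; θ, M, L) = f_{L+1} ∘ g_L ∘ f_L ∘ ⋯ ∘ g_1 ∘ f_1` computed by the
ReLU network with parameters `θ`. -/
def ReLUNetParams.eval {nx nu M L : ℕ} (p : ReLUNetParams nx nu M L)
    (x : Fin nx → ℝ) : Fin nu → ℝ :=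
  affineMapVec p.Wout p.bout <|
    (List.finRange (L - 1)).foldl
      (fun ξ l => reluVec (affineMapVec (p.W l) (p.b l) ξ))
      (reluVec (affineMapVec p.W1 p.b1 x))

/-- A polyhedron `{x | Z x ≤ z}`. -/
def IsPolyhedron {n : ℕ} (S : Set (Fin n → ℝ)) : Prop :=
  ∃ (m : ℕ) (Z : Matrix (Fin m) (Fin n) ℝ) (z : Fin m → ℝ),
    S = {x | ∀ i, (∑ j, Z i j * x j) ≤ z i}

/-- `f` is piecewise affine on `D`: finitely many polyhedra with pairwise disjoint
interiors whose union is `D`, with `f` affine on each. -/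
def IsPWAOn {n m : ℕ} (D : Set (Fin n → ℝ)) (f : (Fin n → ℝ) → Fin m → ℝ) : Prop :=
  ∃ (r : ℕ) (R : Fin r → Set (Fin n → ℝ))
    (K : Fin r → Matrix (Fin m) (Fin n) ℝ) (g : Fin r → Fin m → ℝ),
    (∀ i, IsPolyhedron (R i)) ∧
    (∀ i j, i ≠ j → interior (R i) ∩ interior (R j) = ∅) ∧
    (⋃ i, R i) = D ∧
    (∀ i, ∀ x ∈ R i, f x = affineMapVec (K i) (g i) x)

/-- Scalar-valued piecewise affine function on `D`. -/
def IsPWAOnScalar {n : ℕ} (D : Set (Fin n → ℝ)) (f : (Fin n → ℝ) → ℝ) : Prop :=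
  ∃ (r : ℕ) (R : Fin r → Set (Fin n → ℝ)) (a : Fin r → Fin n → ℝ) (c : Fin r → ℝ),
    (∀ i, IsPolyhedron (R i)) ∧
    (∀ i j, i ≠ j → interior (R i) ∩ interior (R j) = ∅) ∧
    (⋃ i, R i) = D ∧
    (∀ i, ∀ x ∈ R i, f x = (∑ j, a i j * x j) + c i)

/-- `f` agrees with some affine function on the set `S`. -/
def AffineOnSet {n m : ℕ} (f : (Fin n → ℝ) → Fin m → ℝ) (S : Set (Fin n → ℝ)) : Prop :=
  ∃ (A : Matrix (Fin m) (Fin n) ℝ) (b : Fin m → ℝ), ∀ x ∈ S, f x = affineMapVec A b x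

/-- A linear region of `f`: a nonempty open connected set on which `f` is affine,
maximal with this property. -/
def IsLinearRegion {n m : ℕ} (f : (Fin n → ℝ) → Fin m → ℝ) (S : Set (Fin n → ℝ)) : Prop :=
  S.Nonempty ∧ IsOpen S ∧ IsConnected S ∧ AffineOnSet f S ∧
    ∀ S', IsOpen S' → IsConnected S' → S ⊂ S' → ¬ AffineOnSet f S'

/-- Maximum of a nonempty finite family of reals. -/
noncomputable def finMax {N : ℕ} (hN : 0 < N) (g : Fin N → ℝ) : ℝ :=
  Finset.univ.sup' (Finset.univ_nonempty_iff.mpr (Fin.pos_iff_nonempty.mp hN)) g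

/-- The unit hypercube `[0,1]^n`. -/
def unitCube (n : ℕ) : Set (Fin n → ℝ) := {x | ∀ i, 0 ≤ x i ∧ x i ≤ 1}

/-!
Each component `h` of `Au ∘ K ∘ Ax⁻¹` is continuous on the cube and agrees with an affine map `ℓ k`
on each of finitely many closed pieces. Adding `q = ∑_{i,j} |ℓ i - ℓ j|` makes it locally midpoint
convex, hence convex. A continuous convex function that agrees at every point with one of finitely
many affine maps is, by Baire's theorem, the maximum of those among them that lie below it, and `q`
is itself a maximum of affine maps. So `h = max A - max B`, and on the nonnegative orthant the
maximum of `N` affine maps is computed by a ReLU network of width `nx + 1` and depth `N`.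
-/

open Set Filter Topology

section MaxNetwork

variable {nx : ℕ}

def affineCoeffs (φ : (Fin nx → ℝ) →ᵃ[ℝ] ℝ) : Fin nx → ℝ := fun j => φ.linear (Pi.single j 1)

theorem apply_eq_sum_affineCoeffs (φ : (Fin nx → ℝ) →ᵃ[ℝ] ℝ) (y : Fin nx → ℝ) :
    φ y = ∑ j, affineCoeffs φ j * y j + φ 0 := by
  conv_lhs => rw [AffineMap.decomp φ, Pi.add_apply, φ.linear.pi_apply_eq_sum_univ y]
  congr 1
  refine sum_congr rfl fun j _ => ?_
  rw [smul_eq_mul, mul_comm, affineCoeffs]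
  congr 3 with k
  simp [Pi.single_apply, eq_comm]

theorem affineMapVec_snoc {m : ℕ} (W : Matrix (Fin m) (Fin (nx + 1)) ℝ) (b : Fin m → ℝ)
    (y : Fin nx → ℝ) (s : ℝ) (i : Fin m) :
    affineMapVec W b (Fin.snoc y s) i
      = ∑ j, W i j.castSucc * y j + W i (Fin.last nx) * s + b i := by
  simp [affineMapVec, Fin.sum_univ_castSucc]

def inputWeight : Matrix (Fin (nx + 1)) (Fin nx) ℝ := Fin.snoc (fun i => Pi.single i 1) 0

def carryWeight (c : Fin nx → ℝ) : Matrix (Fin (nx + 1)) (Fin (nx + 1)) ℝ :=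
  Fin.snoc (fun i => Fin.snoc (Pi.single i 1) 0) (Fin.snoc c 1)

def carryLayer (u : (Fin nx → ℝ) →ᵃ[ℝ] ℝ) (ξ : Fin (nx + 1) → ℝ) : Fin (nx + 1) → ℝ :=
  reluVec (affineMapVec (carryWeight (affineCoeffs u)) (Fin.snoc 0 (u 0)) ξ)

theorem reluVec_affineMapVec_inputWeight {y : Fin nx → ℝ} (hy : 0 ≤ y) :
    reluVec (affineMapVec inputWeight 0 y) = Fin.snoc y 0 := by
  funext i
  induction i using Fin.lastCases with
  | last => simp [reluVec, affineMapVec, inputWeight]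
  | cast i => simpa [reluVec, affineMapVec, inputWeight, Pi.single_apply] using hy i

theorem carryLayer_snoc (u : (Fin nx → ℝ) →ᵃ[ℝ] ℝ) {y : Fin nx → ℝ} (hy : 0 ≤ y) (s : ℝ) :
    carryLayer u (Fin.snoc y s) = Fin.snoc y (max 0 (u y + s)) := by
  funext i
  induction i using Fin.lastCases with
  | last =>
    simp only [carryLayer, reluVec]
    rw [affineMapVec_snoc, apply_eq_sum_affineCoeffs u y]
    simp [carryWeight, add_right_comm]
  | cast i =>
    simp only [carryLayer, reluVec]
    rw [affineMapVec_snoc]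
    simpa [carryWeight, Pi.single_apply] using hy i

def outputWeight (c : Fin nx → ℝ) : Matrix (Fin 1) (Fin (nx + 1)) ℝ := fun _ => Fin.snoc c 1

theorem affineMapVec_outputWeight (u : (Fin nx → ℝ) →ᵃ[ℝ] ℝ) (y : Fin nx → ℝ) (s : ℝ) :
    affineMapVec (outputWeight (affineCoeffs u)) (fun _ => u 0) (Fin.snoc y s) 0 = u y + s := by
  rw [affineMapVec_snoc, apply_eq_sum_affineCoeffs u y]
  simp [outputWeight, add_right_comm]

theorem Fin.sup'_univ_succ {α : Type*} [LinearOrder α] {n : ℕ} (f : Fin (n + 2) → α) :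
    univ.sup' univ_nonempty f = max (f 0) (univ.sup' univ_nonempty fun k => f (Fin.succ k)) := by
  refine le_antisymm (sup'_le _ _ fun k _ => ?_) <|
    max_le (le_sup' f (mem_univ 0)) (sup'_le _ _ fun k _ => le_sup' f (mem_univ _))
  induction k using Fin.cases with
  | zero => exact le_max_left _ _
  | succ k => exact le_max_of_le_right (le_sup' (fun k => f (Fin.succ k)) (mem_univ k))

theorem foldl_carryLayer {n : ℕ} (ℓ : Fin (n + 1) → (Fin nx → ℝ) →ᵃ[ℝ] ℝ) {y : Fin nx → ℝ}
    (hy : 0 ≤ y) {M : ℝ} (hM : ℓ 0 y ≤ M) :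
    (List.finRange n).foldl (fun ξ l => carryLayer (ℓ l.castSucc - ℓ l.succ) ξ)
        (Fin.snoc y (M - ℓ 0 y))
      = Fin.snoc y (max M (univ.sup' univ_nonempty fun k => ℓ k y) - ℓ (Fin.last n) y) := by
  induction n generalizing M with
  | zero => simp [hM]
  | succ n ih =>
    have hstep : max 0 ((ℓ 0 - ℓ 1) y + (M - ℓ 0 y)) = max M (ℓ 1 y) - ℓ 1 y := by
      rw [← max_sub_sub_right, sub_self, max_comm, AffineMap.coe_sub, Pi.sub_apply]
      ring_nf
    rw [List.finRange_succ, List.foldl_cons, List.foldl_map, carryLayer_snoc _ hy,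
      Fin.castSucc_zero, Fin.succ_zero_eq_one, hstep]
    simp only [← Fin.succ_castSucc]
    have htail := ih (fun k => ℓ k.succ) (M := max M (ℓ 1 y)) (le_max_right _ _)
    rw [Fin.succ_zero_eq_one] at htail
    have h1 : ℓ 1 y ≤ univ.sup' univ_nonempty fun k => ℓ (Fin.succ k) y :=
      le_sup' (fun k => ℓ (Fin.succ k) y) (mem_univ 0)
    rw [htail, Fin.succ_last, Fin.sup'_univ_succ (fun k => ℓ k y), max_assoc, max_eq_right h1,
      ← max_assoc, max_eq_left hM]

/-- The first `nx` neurons carry the nonnegative input `y`; after hidden layer `l = 0, …, n` the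
last one holds `max_{k ≤ l} ℓ k y - ℓ l y`. -/
def maxNet {n : ℕ} (ℓ : Fin (n + 1) → (Fin nx → ℝ) →ᵃ[ℝ] ℝ) :
    ReLUNetParams nx 1 (nx + 1) (n + 1) where
  W1 := inputWeight
  b1 := 0
  W l := carryWeight (affineCoeffs (ℓ (Fin.castSucc l) - ℓ l.succ))
  b l := Fin.snoc 0 ((ℓ (Fin.castSucc l) - ℓ l.succ) 0)
  Wout := outputWeight (affineCoeffs (ℓ (Fin.last n)))
  bout := fun _ => ℓ (Fin.last n) 0

theorem maxNet_eval {n : ℕ} (ℓ : Fin (n + 1) → (Fin nx → ℝ) →ᵃ[ℝ] ℝ) {y : Fin nx → ℝ}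
    (hy : 0 ≤ y) : (maxNet ℓ).eval y 0 = univ.sup' univ_nonempty fun k => ℓ k y := by
  have hfold := foldl_carryLayer ℓ hy le_rfl
  rw [sub_self] at hfold
  change affineMapVec (outputWeight (affineCoeffs (ℓ (Fin.last n)))) (fun _ => ℓ (Fin.last n) 0)
    ((List.finRange n).foldl (fun ξ l => carryLayer (ℓ l.castSucc - ℓ l.succ) ξ)
      (reluVec (affineMapVec inputWeight 0 y))) 0 = _
  rw [reluVec_affineMapVec_inputWeight hy, hfold, affineMapVec_outputWeight, add_sub_cancel,
    max_eq_right (le_sup' (fun k => ℓ k y) (mem_univ 0))]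

theorem exists_reluNet_eval_eq_sup' (A : Finset ((Fin nx → ℝ) →ᵃ[ℝ] ℝ)) (hA : A.Nonempty) :
    ∃ L, 1 ≤ L ∧ ∃ p : ReLUNetParams nx 1 (nx + 1) L,
      ∀ y, 0 ≤ y → p.eval y 0 = A.sup' hA (· y) := by
  obtain ⟨n, hn⟩ := Nat.exists_eq_add_one_of_ne_zero hA.card_pos.ne'
  let e := A.equivFinOfCardEq hn
  refine ⟨n + 1, n.succ_pos, maxNet fun k => e.symm k, fun y hy => ?_⟩
  rw [maxNet_eval _ hy]
  refine le_antisymm (sup'_le _ _ fun k _ => le_sup' (· y) (e.symm k).2)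
    (sup'_le _ _ fun a ha => ?_)
  convert le_sup' (fun k => (e.symm k : (Fin nx → ℝ) →ᵃ[ℝ] ℝ) y) (mem_univ (e ⟨a, ha⟩))
  simp

end MaxNetwork

theorem eventually_forall_mem_imp_mem {X ι : Type*} [TopologicalSpace X] [Finite ι]
    {C : ι → Set X} (hC : ∀ k, IsClosed (C k)) (x : X) :
    ∀ᶠ y in 𝓝 x, ∀ k, y ∈ C k → x ∈ C k := by
  rw [eventually_all]
  intro k
  by_cases hk : x ∈ C k
  · exact Eventually.of_forall fun _ _ => hk
  · filter_upwards [(hC k).isOpen_compl.mem_nhds hk] with y hy hyk using absurd hyk hy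

theorem le_secant_of_eventually_midpoint {φ : ℝ → ℝ} (hφ : ContinuousOn φ (Icc 0 1))
    (hloc : ∀ t ∈ Ioo (0 : ℝ) 1, ∀ᶠ s in 𝓝 0, 2 * φ t ≤ φ (t - s) + φ (t + s)) :
    ∀ t ∈ Icc (0 : ℝ) 1, φ t ≤ (1 - t) * φ 0 + t * φ 1 := by
  set G : ℝ → ℝ := fun t => φ t - ((1 - t) * φ 0 + t * φ 1) with hGdef
  have hG : ContinuousOn G (Icc 0 1) := hφ.sub (by fun_prop)
  obtain ⟨tm, htm, hmax⟩ := isCompact_Icc.exists_isMaxOn ⟨0, by norm_num⟩ hG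
  by_contra! hpos
  obtain ⟨t, ht, hlt⟩ := hpos
  have hm : 0 < G tm := (sub_pos.2 hlt).trans_le (hmax ht)
  -- the largest maximiser of `G` lies in the open interval, where the midpoint bound fails
  have hZ : IsCompact (Icc (0 : ℝ) 1 ∩ G ⁻¹' {G tm}) :=
    isCompact_Icc.of_isClosed_subset
      (hG.preimage_isClosed_of_isClosed isClosed_Icc isClosed_singleton) inter_subset_left
  obtain ⟨t₀, ⟨ht₀, hGt₀⟩, ht₀max⟩ := hZ.exists_isGreatest ⟨tm, htm, rfl⟩
  have hGt₀ : G t₀ = G tm := hGt₀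
  have ht₀' : t₀ ∈ Ioo (0 : ℝ) 1 := by
    refine ⟨ht₀.1.lt_of_ne ?_, ht₀.2.lt_of_ne ?_⟩ <;> rintro rfl <;> simp [hGdef] at hGt₀ <;>
      linarith
  obtain ⟨s, hmid, hs, hs'⟩ := ((hloc t₀ ht₀').filter_mono nhdsWithin_le_nhds |>.and
    (Ioo_mem_nhdsGT (lt_min ht₀'.1 (sub_pos.2 ht₀'.2)))).exists
  have hs₁ : s < t₀ := hs'.trans_le (min_le_left _ _)
  have hs₂ : s < 1 - t₀ := hs'.trans_le (min_le_right _ _)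
  have hleft : G (t₀ - s) ≤ G tm := hmax ⟨by linarith, by linarith⟩
  have hright : G (t₀ + s) < G tm := by
    refine (hmax ⟨by linarith, by linarith⟩).lt_of_ne fun h => ?_
    linarith [ht₀max ⟨⟨by linarith, by linarith⟩, h⟩]
  have : 2 * G t₀ ≤ G (t₀ - s) + G (t₀ + s) := by simp only [hGdef]; linarith
  linarith

theorem sum_abs_eq_sup' {κ : Type*} [Fintype κ] [DecidableEq κ] (x : κ → ℝ) :
    ∑ z, |x z| = univ.sup' univ_nonempty fun σ : κ → Bool => ∑ z, if σ z then x z else -x z := by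
  refine le_antisymm ?_ (sup'_le _ _ fun σ _ => sum_le_sum fun z _ => ?_)
  · refine le_of_eq_of_le (sum_congr rfl fun z _ => ?_)
      (le_sup' (fun σ : κ → Bool => ∑ z, if σ z then x z else -x z)
        (mem_univ fun z => decide (0 ≤ x z)))
    by_cases hz : 0 ≤ x z
    · simp [hz, abs_of_nonneg]
    · simp [hz, abs_of_neg (not_le.1 hz)]
  · split_ifs
    exacts [le_abs_self _, neg_le_abs _]

section PiecewiseAffine

variable {E : Type*} [NormedAddCommGroup E] [NormedSpace ℝ E]

theorem convexOn_of_eventually_midpoint {S : Set E} {F : E → ℝ} (hS : Convex ℝ S)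
    (hF : ContinuousOn F S)
    (hloc : ∀ x ∈ S, ∀ᶠ d in 𝓝 0, x - d ∈ S → x + d ∈ S → 2 * F x ≤ F (x - d) + F (x + d)) :
    ConvexOn ℝ S F := by
  refine ⟨hS, fun a ha b hb μ ν hμ hν hμν => ?_⟩
  obtain rfl : μ = 1 - ν := by linarith
  let L : ℝ →ᵃ[ℝ] E := AffineMap.lineMap a b
  have hL : ∀ t, L t = (1 - t) • a + t • b := AffineMap.lineMap_apply_module a b
  have hLS : ∀ t ∈ Icc (0 : ℝ) 1, L t ∈ S := fun t ht => hS.lineMap_mem ha hb ht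
  have hφ : ContinuousOn (fun t => F (L t)) (Icc 0 1) :=
    hF.comp AffineMap.lineMap_continuous.continuousOn hLS
  have hloc' : ∀ t ∈ Ioo (0 : ℝ) 1, ∀ᶠ s in 𝓝 0, 2 * F (L t) ≤ F (L (t - s)) + F (L (t + s)) := by
    intro t ht
    have hd : Tendsto (fun s : ℝ => s • (b - a)) (𝓝 0) (𝓝 0) := by
      simpa using (tendsto_id (x := 𝓝 (0 : ℝ))).smul_const (b - a)
    have hIcc : ∀ᶠ s in 𝓝 (0 : ℝ), t - s ∈ Icc (0 : ℝ) 1 ∧ t + s ∈ Icc (0 : ℝ) 1 := by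
      have ht' := Icc_mem_nhds ht.1 ht.2
      exact (((continuous_const.sub continuous_id).tendsto' 0 t (sub_zero t)).eventually ht').and
        (((continuous_const.add continuous_id).tendsto' 0 t (add_zero t)).eventually ht')
    filter_upwards [hd.eventually (hloc _ (hLS t (Ioo_subset_Icc_self ht))), hIcc]
      with s hs ⟨hm, hp⟩
    have hsub : L (t - s) = L t - s • (b - a) := by simp only [hL]; module
    have hadd : L (t + s) = L t + s • (b - a) := by simp only [hL]; module
    rw [hsub, hadd]
    exact hs (hsub ▸ hLS _ hm) (hadd ▸ hLS _ hp)
  simpa [hL, smul_eq_mul] using le_secant_of_eventually_midpoint hφ hloc' ν ⟨hν, by linarith⟩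

theorem ConvexOn.le_of_eventually_eq_affine {S : Set E} {F : E → ℝ} (hF : ConvexOn ℝ S F)
    {a : E →ᵃ[ℝ] ℝ} {z : E} (hz : z ∈ S) (hloc : ∀ᶠ y in 𝓝[S] z, F y = a y) {w : E}
    (hw : w ∈ S) : a w ≤ F w := by
  let L : ℝ →ᵃ[ℝ] E := AffineMap.lineMap z w
  have hL : Tendsto L (𝓝[>] 0) (𝓝[S] z) := by
    refine tendsto_nhdsWithin_iff.2 ⟨?_, ?_⟩
    · exact (AffineMap.lineMap_continuous.tendsto' 0 z (AffineMap.lineMap_apply_zero z w)).mono_left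
        nhdsWithin_le_nhds
    · filter_upwards [Ioo_mem_nhdsGT one_pos] with t ht
      exact hF.1.lineMap_mem hz hw (Ioo_subset_Icc_self ht)
  obtain ⟨t, hFt, ht⟩ := ((hL.eventually hloc).and (Ioo_mem_nhdsGT one_pos)).exists
  have hconv := hF.2 hz hw (sub_nonneg.2 ht.2.le) ht.1.le (sub_add_cancel 1 t)
  rw [← AffineMap.lineMap_apply_module] at hconv
  change F (L t) ≤ _ at hconv
  rw [hFt, AffineMap.apply_lineMap, AffineMap.lineMap_apply_module,
    Filter.EventuallyEq.eq_of_nhdsWithin hloc hz] at hconv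
  simp only [smul_eq_mul] at hconv
  nlinarith [ht.1]

theorem ConvexOn.exists_eq_sup'_of_forall_exists_eq [FiniteDimensional ℝ E] {S : Set E} {F : E → ℝ}
    (hF : ConvexOn ℝ S F) (hFc : ContinuousOn F S) (hS : IsClosed S)
    (P : Finset (E →ᵃ[ℝ] ℝ)) (hP : ∀ y ∈ S, ∃ a ∈ P, F y = a y) :
    ∃ (A : Finset (E →ᵃ[ℝ] ℝ)) (hA : A.Nonempty), ∀ y ∈ S, F y = A.sup' hA (· y) := by
  classical
  rcases S.eq_empty_or_nonempty with rfl | hSne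
  · exact ⟨{0}, singleton_nonempty 0, by simp⟩
  have := FiniteDimensional.complete ℝ E
  have : CompleteSpace S := hS.completeSpace_coe
  have : Nonempty S := hSne.to_subtype
  let W : P → Set S := fun a => {z | F z = (a : E →ᵃ[ℝ] ℝ) z}
  have hWc : ∀ a, IsClosed (W a) := fun a =>
    isClosed_eq hFc.domRestrict (a.1.continuous_of_finiteDimensional.comp continuous_subtype_val)
  have hWcover : ⋃ a, W a = univ := eq_univ_of_forall fun z => by
    obtain ⟨a, ha, hza⟩ := hP z z.2
    exact mem_iUnion.2 ⟨⟨a, ha⟩, hza⟩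
  -- Baire: some piece has interior in `S`, and such a piece supports `F` from below
  have hdense := dense_iUnion_interior_of_closed hWc hWcover
  let A := P.filter fun a => ∀ w ∈ S, a w ≤ F w
  have hsupp : ∀ a z, z ∈ interior (W a) → (a : E →ᵃ[ℝ] ℝ) ∈ A ∧ F z = (a : E →ᵃ[ℝ] ℝ) z :=
    fun a z hz => ⟨mem_filter.2 ⟨a.2, fun _ hw => hF.le_of_eventually_eq_affine z.2
      ((eventually_nhds_subtype_iff S z _).1 (mem_interior_iff_mem_nhds.1 hz)) hw⟩,
      interior_subset (s := W a) hz⟩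
  obtain ⟨z₀, hz₀⟩ := hdense.nonempty
  obtain ⟨a₀, ha₀⟩ := mem_iUnion.1 hz₀
  have hA : A.Nonempty := ⟨_, (hsupp a₀ z₀ ha₀).1⟩
  have hG : Continuous fun z : S => A.sup' hA (· z) :=
    Continuous.finset_sup'_apply hA fun a _ =>
      a.continuous_of_finiteDimensional.comp continuous_subtype_val
  have hle : closure (⋃ a, interior (W a)) ⊆ {z | F z ≤ A.sup' hA (· z)} :=
    (isClosed_le hFc.domRestrict hG).closure_subset_iff.2 fun z hz => by
      obtain ⟨a, ha⟩ := mem_iUnion.1 hz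
      obtain ⟨haA, hza⟩ := hsupp a z ha
      exact hza.trans_le (le_sup' (· z) haA)
  refine ⟨A, hA, fun y hy => le_antisymm ?_ (sup'_le _ _ fun a ha => (mem_filter.1 ha).2 y hy)⟩
  exact hle (hdense.closure_eq ▸ mem_univ (⟨y, hy⟩ : S))

theorem AffineMap.map_sub_add_map_add (u : E →ᵃ[ℝ] ℝ) (x d : E) :
    u (x - d) + u (x + d) = 2 * u x := by
  have hadd : u (x + d) = u.linear d + u x := by
    rw [add_comm, ← vadd_eq_add, u.map_vadd, vadd_eq_add]
  have hsub : u (x - d) = u x - u.linear d := by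
    rw [sub_eq_add_neg, add_comm, ← vadd_eq_add, u.map_vadd, vadd_eq_add, map_neg]
    ring
  rw [hadd, hsub]
  ring

theorem AffineMap.two_mul_abs_le (u : E →ᵃ[ℝ] ℝ) (x d : E) :
    2 * |u x| ≤ |u (x - d)| + |u (x + d)| := by
  rw [← abs_two, ← abs_mul, ← u.map_sub_add_map_add x d]
  exact abs_add_le _ _

variable {ι : Type*} [Fintype ι]

def sumAbsSub (ℓ : ι → E →ᵃ[ℝ] ℝ) (y : E) : ℝ := ∑ z : ι × ι, |ℓ z.1 y - ℓ z.2 y|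

theorem two_mul_sumAbsSub_add_abs_le (ℓ : ι → E →ᵃ[ℝ] ℝ) {i j : ι} {x : E}
    (hx : ℓ i x = ℓ j x) (d : E) :
    2 * sumAbsSub ℓ x + |ℓ i (x - d) - ℓ j (x - d)|
      ≤ sumAbsSub ℓ (x - d) + sumAbsSub ℓ (x + d) := by
  have hterm : ∀ z : ι × ι,
      0 ≤ |ℓ z.1 (x - d) - ℓ z.2 (x - d)| + |ℓ z.1 (x + d) - ℓ z.2 (x + d)|
        - 2 * |ℓ z.1 x - ℓ z.2 x| := fun z => by
    have := (ℓ z.1 - ℓ z.2).two_mul_abs_le x d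
    simp only [AffineMap.coe_sub, Pi.sub_apply] at this
    linarith
  have hsingle := single_le_sum (fun z _ => hterm z) (mem_univ (i, j))
  simp only [sum_sub_distrib, sum_add_distrib, ← mul_sum, hx, sub_self, abs_zero,
    mul_zero, sub_zero] at hsingle
  simp only [sumAbsSub]
  linarith [abs_nonneg (ℓ i (x + d) - ℓ j (x + d))]

theorem exists_sumAbsSub_eq_sup' (ℓ : ι → E →ᵃ[ℝ] ℝ) :
    ∃ (B : Finset (E →ᵃ[ℝ] ℝ)) (hB : B.Nonempty), ∀ y, sumAbsSub ℓ y = B.sup' hB (· y) := by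
  classical
  let b : (ι × ι → Bool) → E →ᵃ[ℝ] ℝ := fun σ =>
    ∑ z, if σ z then ℓ z.1 - ℓ z.2 else ℓ z.2 - ℓ z.1
  refine ⟨univ.image b, univ_nonempty.image b, fun y => ?_⟩
  rw [sup'_image, sumAbsSub, sum_abs_eq_sup']
  congr 1 with σ
  have heval := map_sum (AddMonoidHom.mk' (fun f : E →ᵃ[ℝ] ℝ => f y) fun _ _ => rfl)
    (fun z => if σ z then ℓ z.1 - ℓ z.2 else ℓ z.2 - ℓ z.1) univ
  rw [Function.comp_apply]
  refine (sum_congr rfl fun z _ => ?_).trans heval.symm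
  split_ifs <;> simp

variable {S : Set E} {h : E → ℝ} {C : ι → Set E} {ℓ : ι → E →ᵃ[ℝ] ℝ}

theorem eventually_midpoint_add_sumAbsSub (hC : ∀ k, IsClosed (C k)) (hcover : S ⊆ ⋃ k, C k)
    (hℓ : ∀ k, ∀ y ∈ C k ∩ S, h y = ℓ k y) {x : E} (hx : x ∈ S) :
    ∀ᶠ d in 𝓝 0, x - d ∈ S → x + d ∈ S →
      2 * (h x + sumAbsSub ℓ x)
        ≤ (h (x - d) + sumAbsSub ℓ (x - d)) + (h (x + d) + sumAbsSub ℓ (x + d)) := by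
  have hsub : Tendsto (fun d => x - d) (𝓝 0) (𝓝 x) := by
    simpa using (continuous_sub_left x).tendsto 0
  have hadd : Tendsto (fun d => x + d) (𝓝 0) (𝓝 x) := by
    simpa using (continuous_const_add x).tendsto 0
  have hnear := eventually_forall_mem_imp_mem hC x
  filter_upwards [hsub.eventually hnear, hadd.eventually hnear] with d hm hp hmS hpS
  obtain ⟨i, hi⟩ := mem_iUnion.1 (hcover hmS)
  obtain ⟨j, hj⟩ := mem_iUnion.1 (hcover hpS)
  -- `h` bends at `x` from `ℓ i` to `ℓ j`; the kink `|ℓ i - ℓ j|` of `sumAbsSub` straightens it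
  have hxi := hℓ i x ⟨hm i hi, hx⟩
  have hxj := hℓ j x ⟨hp j hj, hx⟩
  have hkink := two_mul_sumAbsSub_add_abs_le ℓ (hxi.symm.trans hxj) d
  linarith [hℓ i _ ⟨hi, hmS⟩, hℓ j _ ⟨hj, hpS⟩, (ℓ j).map_sub_add_map_add x d,
    neg_abs_le (ℓ i (x - d) - ℓ j (x - d))]

variable [FiniteDimensional ℝ E]

theorem continuous_sumAbsSub (ℓ : ι → E →ᵃ[ℝ] ℝ) : Continuous (sumAbsSub ℓ) :=
  continuous_finsetSum _ fun z _ =>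
    ((ℓ z.1).continuous_of_finiteDimensional.sub (ℓ z.2).continuous_of_finiteDimensional).abs

theorem convexOn_add_sumAbsSub (hS : Convex ℝ S) (hh : ContinuousOn h S)
    (hC : ∀ k, IsClosed (C k)) (hcover : S ⊆ ⋃ k, C k) (hℓ : ∀ k, ∀ y ∈ C k ∩ S, h y = ℓ k y) :
    ConvexOn ℝ S (fun y => h y + sumAbsSub ℓ y) :=
  convexOn_of_eventually_midpoint hS (hh.add (continuous_sumAbsSub ℓ).continuousOn)
    fun _ hx => eventually_midpoint_add_sumAbsSub hC hcover hℓ hx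

theorem exists_eq_sup'_sub_sup' (hS : Convex ℝ S) (hSc : IsClosed S) (hh : ContinuousOn h S)
    (hC : ∀ k, IsClosed (C k)) (hcover : S ⊆ ⋃ k, C k) (hℓ : ∀ k, ∀ y ∈ C k ∩ S, h y = ℓ k y) :
    ∃ (A B : Finset (E →ᵃ[ℝ] ℝ)) (hA : A.Nonempty) (hB : B.Nonempty),
      ∀ y ∈ S, h y = A.sup' hA (· y) - B.sup' hB (· y) := by
  classical
  obtain ⟨B, hB, hsum⟩ := exists_sumAbsSub_eq_sup' ℓ
  have hpieces : ∀ y ∈ S, ∃ a ∈ image₂ (· + ·) (univ.image ℓ) B, h y + sumAbsSub ℓ y = a y := by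
    intro y hy
    obtain ⟨k, hk⟩ := mem_iUnion.1 (hcover hy)
    obtain ⟨b, hb, hby⟩ := exists_mem_eq_sup' hB (· y)
    exact ⟨ℓ k + b, mem_image₂_of_mem (mem_image_of_mem ℓ (mem_univ k)) hb, by
      rw [hℓ k y ⟨hk, hy⟩, hsum, hby, AffineMap.coe_add, Pi.add_apply]⟩
  obtain ⟨A, hA, hF⟩ :=
    (convexOn_add_sumAbsSub hS hh hC hcover hℓ).exists_eq_sup'_of_forall_exists_eq
      (hh.add (continuous_sumAbsSub ℓ).continuousOn) hSc _ hpieces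
  exact ⟨A, B, hA, hB, fun y hy => by rw [← hF y hy, ← hsum]; ring⟩

end PiecewiseAffine

theorem unitCube_eq_Icc (n : ℕ) : unitCube n = Set.Icc 0 1 := by
  ext x
  simp [unitCube, Pi.le_def, forall_and]

theorem IsPolyhedron.isClosed {n : ℕ} {S : Set (Fin n → ℝ)} (hS : IsPolyhedron S) :
    IsClosed S := by
  obtain ⟨m, Z, z, rfl⟩ := hS
  simp only [ofPred_forall]
  exact isClosed_iInter fun i => isClosed_le (by fun_prop) continuous_const

def affineMapVecAffine {m n : ℕ} (W : Matrix (Fin m) (Fin n) ℝ) (b : Fin m → ℝ) :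
    (Fin n → ℝ) →ᵃ[ℝ] (Fin m → ℝ) :=
  W.mulVecLin.toAffineMap + AffineMap.const ℝ _ b

theorem affineMapVecAffine_apply {m n : ℕ} (W : Matrix (Fin m) (Fin n) ℝ) (b : Fin m → ℝ)
    (x : Fin n → ℝ) : affineMapVecAffine W b x = affineMapVec W b x := rfl

theorem IsPWAOn.exists_comp_symm_eq_sup'_sub_sup' {n m : ℕ} {D S : Set (Fin n → ℝ)}
    {K : (Fin n → ℝ) → Fin m → ℝ} (hK : IsPWAOn D K) (hKc : ContinuousOn K D)
    (e : (Fin n → ℝ) ≃ᵃ[ℝ] (Fin n → ℝ)) (heD : e '' D = S) (hS : Convex ℝ S) (hSc : IsClosed S)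
    (φ : (Fin m → ℝ) →ᵃ[ℝ] ℝ) :
    ∃ (A B : Finset ((Fin n → ℝ) →ᵃ[ℝ] ℝ)) (hA : A.Nonempty) (hB : B.Nonempty),
      ∀ y ∈ S, φ (K (e.symm y)) = A.sup' hA (· y) - B.sup' hB (· y) := by
  obtain ⟨r, R, W, b, hR, -, hRD, hRK⟩ := hK
  subst heD
  have hSD : ∀ y ∈ e '' D, e.symm y ∈ D := by
    rintro _ ⟨x, hx, rfl⟩
    simpa using hx
  have he : Continuous e.symm := e.symm.continuous_of_finiteDimensional
  refine exists_eq_sup'_sub_sup' hS hSc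
    (φ.continuous_of_finiteDimensional.comp_continuousOn (hKc.comp he.continuousOn hSD))
    (C := fun k => e.symm ⁻¹' R k) (fun k => (hR k).isClosed.preimage he)
    (fun y hy => by simpa only [← hRD, mem_iUnion, Set.mem_preimage] using hSD y hy)
    (ℓ := fun k => φ.comp ((affineMapVecAffine (W k) (b k)).comp e.symm.toAffineMap))
    fun k y hy => ?_
  simp [hRK k _ hy.1, affineMapVecAffine_apply]

theorem mpc_law_exact_relu_representation_affine_general (nx nu : ℕ) (RΩ : Set (Fin nx → ℝ))
    (K : (Fin nx → ℝ) → Fin nu → ℝ)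
    (hcont : ContinuousOn K RΩ) (hpwa : IsPWAOn RΩ K)
    (Ax : (Fin nx → ℝ) ≃ᵃ[ℝ] (Fin nx → ℝ))
    (Au : (Fin nu → ℝ) ≃ᵃ[ℝ] (Fin nu → ℝ))
    (hAx : Ax '' RΩ = unitCube nx) :
    ∃ (rγ rη : Fin nu → ℕ), (∀ i, 1 ≤ rγ i) ∧ (∀ i, 1 ≤ rη i) ∧
      ∃ (θγ : ∀ i, ReLUNetParams nx 1 (nx + 1) (rγ i))
        (θη : ∀ i, ReLUNetParams nx 1 (nx + 1) (rη i)),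
        ∀ x ∈ RΩ,
          K x = Au.symm (fun i => (θγ i).eval (Ax x) 0 - (θη i).eval (Ax x) 0) := by
  choose A B hA hB hAB using fun i : Fin nu =>
    hpwa.exists_comp_symm_eq_sup'_sub_sup' hcont Ax (hAx.trans (unitCube_eq_Icc nx))
      (convex_Icc 0 1) isClosed_Icc ((LinearMap.proj i).toAffineMap.comp Au.toAffineMap)
  choose rγ hrγ θγ hθγ using fun i => exists_reluNet_eval_eq_sup' (A i) (hA i)
  choose rη hrη θη hθη using fun i => exists_reluNet_eval_eq_sup' (B i) (hB i)
  refine ⟨rγ, rη, hrγ, hrη, θγ, θη, fun x hx => ?_⟩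
  have hy : Ax x ∈ Set.Icc 0 1 := unitCube_eq_Icc nx ▸ hAx ▸ mem_image_of_mem Ax hx
  rw [eq_comm, AffineEquiv.symm_apply_eq]
  funext i
  rw [hθγ i _ hy.1, hθη i _ hy.1, ← hAB i _ hy]
  simp

/-- a continuous PWA map on a bounded polytopic set, transformable by
invertible affine maps to a nonnegative map on the unit cube, is exactly represented by the
two affine transformations and `2 nu` ReLU networks of width `nx + 1`. -/
theorem mpc_law_exact_relu_representation_affine (nx nu : ℕ) (RΩ : Set (Fin nx → ℝ))
    (hpoly : IsPolyhedron RΩ) (hbdd : Bornology.IsBounded RΩ)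
    (K : (Fin nx → ℝ) → Fin nu → ℝ)
    (hcont : ContinuousOn K RΩ) (hpwa : IsPWAOn RΩ K)
    (Ax : (Fin nx → ℝ) ≃ᵃ[ℝ] (Fin nx → ℝ))
    (Au : (Fin nu → ℝ) ≃ᵃ[ℝ] (Fin nu → ℝ))
    (hAx : Ax '' RΩ = unitCube nx)
    (hnonneg : ∀ y ∈ unitCube nx, ∀ i, 0 ≤ Au (K (Ax.symm y)) i) :
    ∃ (rγ rη : Fin nu → ℕ), (∀ i, 1 ≤ rγ i) ∧ (∀ i, 1 ≤ rη i) ∧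
      ∃ (θγ : ∀ i, ReLUNetParams nx 1 (nx + 1) (rγ i))
        (θη : ∀ i, ReLUNetParams nx 1 (nx + 1) (rη i)),
        ∀ x ∈ RΩ,
          K x = Au.symm (fun i => (θγ i).eval (Ax x) 0 - (θη i).eval (Ax x) 0) :=
  mpc_law_exact_relu_representation_affine_general nx nu RΩ K hcont hpwa Ax Au hAx
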